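/- arXiv:2305.16118 — 6 statements merged into one kernel-verified Lean document; each statement's English description precedes it below -/
import Mathlib

section
/- Let A be a set, let (base, step, conc) be a semantic acceleration lemma over A, and let inv ⊆ A. Define step' = {(a, a') ∈ step | a' ∈ inv}. Then (base ∩ inv, step', conc ∩ inv) is also a semantic acceleration lemma over A; that is: (i) for every infinite sequence α : ℕ → A with α(0) ∈ conc ∩ inv and (α(i), α(i+1)) ∈ step' for all i ∈ ℕ, there exists k ∈ ℕ with α(k) ∈ base ∩ inv; and (ii) for every a ∈ conc ∩ inv with a ∉ base ∩ inv and every a' with (a, a') ∈ step', also a' ∈ conc ∩ inv. -/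
/-- A semantic acceleration lemma over a type `A`: a triple `(base, step, conc)` of
subsets such that (i) every infinite `step`-sequence starting in `conc` eventually
reaches `base`, and (ii) `conc \ base` is closed under `step`-successors. -/
def IsAccelLemma {A : Type*} (base : Set A) (step : Set (A × A)) (conc : Set A) : Prop :=
  (∀ α : ℕ → A, α 0 ∈ conc → (∀ i : ℕ, (α i, α (i + 1)) ∈ step) → ∃ k : ℕ, α k ∈ base) ∧
  (∀ a ∈ conc, a ∉ base → ∀ a' : A, (a, a') ∈ step → a' ∈ conc)

/-- Proposition 7.2 (closure of acceleration lemmas under lemma invariants):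
if `(base, step, conc)` is a semantic acceleration lemma over `A` and `inv ⊆ A`,
then `(base ∩ inv, {(a, a') ∈ step | a' ∈ inv}, conc ∩ inv)` is also a semantic
acceleration lemma over `A`. -/
theorem accel_lemma_inter_invariant {A : Type*} (base conc inv : Set A) (step : Set (A × A))
    (h : IsAccelLemma base step conc) :
    IsAccelLemma (base ∩ inv) {p : A × A | p ∈ step ∧ p.2 ∈ inv} (conc ∩ inv) := by
  obtain ⟨h1, h2⟩ := h
  constructor
  · intro α h0 hs
    obtain ⟨k, hk⟩ := h1 α h0.1 (fun i => (hs i).1)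
    refine ⟨k, hk, ?_⟩
    cases k with
    | zero => exact h0.2
    | succ n => exact (hs n).2
  · rintro a ⟨hac, hai⟩ hnb a' ⟨hstep, hinv⟩
    refine ⟨h2 a hac ?_ a' hstep, hinv⟩
    intro hb
    exact hnb ⟨hb, hai⟩
end

section
/- Let G = (S, M_e, M_s, ρ) be a game structure, d ⊆ S, and a : ℕ → 𝒫(S) a sequence of sets of states such that a(1) = d, a(n) ∪ CPre_Sys(a(n)) ⊆ a(n+1) for all n ≥ 1, and a(n) ⊆ Attr_Sys(d) for all n ≥ 1. If a(N+1) = a(N) for some N ≥ 1, then a(N) = Attr_Sys(d). -/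
/-- A two-player game structure: states `S`, environment moves `Me`, system moves `Ms`,
and a transition relation such that every state has a successor and the two players'
moves uniquely determine the successor. -/
structure GameStructure (S : Type*) (Me : Type*) (Ms : Type*) where
  rel : S → Me → Ms → S → Prop
  exists_succ : ∀ s : S, ∃ (me : Me) (ms : Ms) (s' : S), rel s me ms s'
  deterministic : ∀ (s : S) (me : Me) (ms : Ms) (s₁ s₂ : S),
    rel s me ms s₁ → rel s me ms s₂ → s₁ = s₂

variable {S Me Ms : Type*}

/-- The environment moves enabled in a state. -/
def enabledE (G : GameStructure S Me Ms) (s : S) : Set Me :=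
  {me | ∃ (ms : Ms) (s' : S), G.rel s me ms s'}

/-- The system moves enabled in a state after a given environment move. -/
def enabledS (G : GameStructure S Me Ms) (s : S) (me : Me) : Set Ms :=
  {ms | ∃ s' : S, G.rel s me ms s'}

/-- A strategy for the system player: it maps a nonempty finite sequence of states,
given as the pair of its strict prefix `h = (s₀, …, s_{n-1})` and its last state `s = sₙ`,
together with an environment move, to a system move; on enabled environment moves it
must choose an enabled system move. -/
structure SysStrategy (G : GameStructure S Me Ms) where
  act : List S → S → Me → Ms
  act_enabled : ∀ (h : List S) (s : S) (me : Me),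
    me ∈ enabledE G s → act h s me ∈ enabledS G s me

/-- A strategy for the environment player: it maps a nonempty finite sequence of states,
given as the pair of its strict prefix `h = (s₀, …, s_{n-1})` and its last state `s = sₙ`,
to an enabled environment move. -/
structure EnvStrategy (G : GameStructure S Me Ms) where
  act : List S → S → Me
  act_enabled : ∀ (h : List S) (s : S), act h s ∈ enabledE G s

/-- `π` is a play consistent with the system strategy `σ`: at every step `n` there is an
enabled environment move `me` such that the transition from `π n` under `me` and the
move chosen by `σ` on the history `(π 0, …, π n)` leads to `π (n+1)`. -/
def SysPlay (G : GameStructure S Me Ms) (σ : SysStrategy G) (π : ℕ → S) : Prop :=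
  ∀ n : ℕ, ∃ me ∈ enabledE G (π n),
    G.rel (π n) me (σ.act ((List.range n).map π) (π n) me) (π (n + 1))

/-- `π` is a play consistent with the environment strategy `σ`: at every step `n` there
is a system move `ms` enabled after the environment move chosen by `σ` on the history
`(π 0, …, π n)` such that the corresponding transition leads to `π (n+1)`. -/
def EnvPlay (G : GameStructure S Me Ms) (σ : EnvStrategy G) (π : ℕ → S) : Prop :=
  ∀ n : ℕ, ∃ ms ∈ enabledS G (π n) (σ.act ((List.range n).map π) (π n)),
    G.rel (π n) (σ.act ((List.range n).map π) (π n)) ms (π (n + 1))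

/-- The system attractor of `T`: states from which the system has a strategy forcing
every consistent play to visit `T`. -/
def attrSys (G : GameStructure S Me Ms) (T : Set S) : Set S :=
  {s | ∃ σ : SysStrategy G, ∀ π : ℕ → S, π 0 = s → SysPlay G σ π → ∃ n : ℕ, π n ∈ T}

/-- The environment attractor of `T`: states from which the environment has a strategy
forcing every consistent play to visit `T`. -/
def attrEnv (G : GameStructure S Me Ms) (T : Set S) : Set S :=
  {s | ∃ σ : EnvStrategy G, ∀ π : ℕ → S, π 0 = s → EnvPlay G σ π → ∃ n : ℕ, π n ∈ T}

/-- The controllable predecessor operator for the system player. -/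
def cpreSys (G : GameStructure S Me Ms) (X : Set S) : Set S :=
  {s | ∀ me ∈ enabledE G s, ∃ ms ∈ enabledS G s me, ∀ s' : S, G.rel s me ms s' → s' ∈ X}

/-- The controllable predecessor operator for the environment player. -/
def cpreEnv (G : GameStructure S Me Ms) (X : Set S) : Set S :=
  {s | ∃ me ∈ enabledE G s, ∀ ms ∈ enabledS G s me, ∀ s' : S, G.rel s me ms s' → s' ∈ X}

/-- Theorem 6.2 (abstract soundness of the accelerated attractor iteration): if a
monotone iteration `a` starts at `d`, contains the controllable-predecessor step,
only ever adds states of the system attractor of `d`, and stabilizes at step `N`,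
then `a N` is exactly the system attractor of `d`. -/
theorem accelerated_attractor_iteration_sound (G : GameStructure S Me Ms) (d : Set S)
    (a : ℕ → Set S)
    (h1 : a 1 = d)
    (hstep : ∀ n : ℕ, 1 ≤ n → a n ∪ cpreSys G (a n) ⊆ a (n + 1))
    (hsub : ∀ n : ℕ, 1 ≤ n → a n ⊆ attrSys G d)
    (N : ℕ) (hN : 1 ≤ N) (hfix : a (N + 1) = a N) :
    a N = attrSys G d := by
  apply Set.Subset.antisymm (hsub N hN)
  intro s hs
  by_contra hsN
  obtain ⟨σ, hσ⟩ := hs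
  -- closure of `a N` under cpre
  have hcl : cpreSys G (a N) ⊆ a N := by
    intro x hx
    rw [← hfix]
    exact hstep N hN (Or.inr hx)
  -- d ⊆ a N
  have hd : d ⊆ a N := by
    rw [← h1]
    clear hfix hsN hσ hcl
    induction N with
    | zero => omega
    | succ n ih =>
      rcases Nat.lt_or_ge 1 (n + 1) with hlt | hle
      · have hn : 1 ≤ n := by omega
        exact fun x hx => hstep n hn (Or.inl (ih hn hx))
      · have : n + 1 = 1 := by omega
        rw [this]
  -- extraction: from a state outside `a N`, the environment can stay outside
  have key : ∀ (h : List S) (t : S), t ∉ a N →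
      ∃ s', s' ∉ a N ∧ ∃ me ∈ enabledE G t, G.rel t me (σ.act h t me) s' := by
    intro h t ht
    have h2 : t ∉ cpreSys G (a N) := fun hc => ht (hcl hc)
    simp only [cpreSys, Set.mem_setOf_eq] at h2
    push_neg at h2
    obtain ⟨me, hme, hforall⟩ := h2
    obtain ⟨s', hrel, hs'⟩ := hforall (σ.act h t me) (σ.act_enabled h t me hme)
    exact ⟨s', hs', me, hme, hrel⟩
  classical
  -- successor function
  let next : List S → S → S := fun h t =>
    if ht : t ∉ a N then (key h t ht).choose else t
  have hnext : ∀ (h : List S) (t : S) (ht : t ∉ a N),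
      next h t ∉ a N ∧ ∃ me ∈ enabledE G t, G.rel t me (σ.act h t me) (next h t) := by
    intro h t ht
    have : next h t = (key h t ht).choose := dif_pos ht
    rw [this]
    exact (key h t ht).choose_spec
  -- build the play together with its history
  let g : ℕ → List S × S := fun n =>
    Nat.rec (([], s) : List S × S) (fun _ p => (p.1 ++ [p.2], next p.1 p.2)) n
  let π : ℕ → S := fun n => (g n).2
  have hg0 : g 0 = ([], s) := rfl
  have hgs : ∀ n, g (n + 1) = ((g n).1 ++ [(g n).2], next (g n).1 (g n).2) :=
    fun n => rfl
  have hout : ∀ n, π n ∉ a N := by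
    intro n
    induction n with
    | zero => exact hsN
    | succ n ih =>
      have := (hnext (g n).1 (g n).2 ih).1
      simpa [π, hgs n] using this
  have hhist : ∀ n, (g n).1 = (List.range n).map π := by
    intro n
    induction n with
    | zero => simp [hg0]
    | succ n ih =>
      rw [hgs n, ih, List.range_succ, List.map_append]
      rfl
  have hplay : SysPlay G σ π := by
    intro n
    obtain ⟨me, hme, hrel⟩ := (hnext (g n).1 (g n).2 (hout n)).2
    refine ⟨me, hme, ?_⟩
    have h1' : π (n + 1) = next (g n).1 (g n).2 := by simp [π, hgs n]
    rw [h1', ← hhist n]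
    exact hrel
  obtain ⟨n, hn⟩ := hσ π rfl hplay
  exact hout n (hd hn)
end

section
/- Let G = (S, M_e, M_s, ρ) be a game structure and d ⊆ S. Define a : ℕ → 𝒫(S) by a(1) = d and a(n+1) = a(n) ∪ CPre_Env(a(n)) for n ≥ 1. If a(N+1) = a(N) for some N ≥ 1, then a(N) = Attr_Env(d). -/
variable {S Me Ms : Type*}

/-! ### Auxiliary definitions and lemmas for the proof -/

open scoped Classical

/-- A default enabled environment move in a state. -/
noncomputable def defaultMe (G : GameStructure S Me Ms) (s : S) : Me :=
  (G.exists_succ s).choose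

lemma defaultMe_enabled (G : GameStructure S Me Ms) (s : S) :
    defaultMe G s ∈ enabledE G s :=
  (G.exists_succ s).choose_spec

/-- The rank of a state with respect to the iteration `a`. -/
noncomputable def rk (a : ℕ → Set S) (s : S) : ℕ := sInf {n | s ∈ a (n + 1)}

/-- An attractor move for the environment: if the state lies in the controllable
predecessor of its rank level, pick a witnessing move; otherwise a default move. -/
noncomputable def attMove (G : GameStructure S Me Ms) (a : ℕ → Set S) (s : S) : Me :=
  if h : s ∈ cpreEnv G (a (rk a s)) then Exists.choose h else defaultMe G s

lemma attMove_enabled (G : GameStructure S Me Ms) (a : ℕ → Set S) (s : S) :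
    attMove G a s ∈ enabledE G s := by
  unfold attMove
  split
  · next h => exact (Exists.choose_spec h).1
  · exact defaultMe_enabled G s

lemma attMove_spec (G : GameStructure S Me Ms) (a : ℕ → Set S) (s : S)
    (h : s ∈ cpreEnv G (a (rk a s))) :
    ∀ ms ∈ enabledS G s (attMove G a s), ∀ s' : S,
      G.rel s (attMove G a s) ms s' → s' ∈ a (rk a s) := by
  unfold attMove
  rw [dif_pos h]
  exact (Exists.choose_spec h).2

lemma escape_exists (G : GameStructure S Me Ms) (X : Set S) (s : S)
    (hs : s ∉ cpreEnv G X) (me : Me) (hme : me ∈ enabledE G s) :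
    ∃ ms, ms ∈ enabledS G s me ∧ ∃ s', G.rel s me ms s' ∧ s' ∉ X := by
  by_contra h
  push_neg at h
  exact hs ⟨me, hme, fun ms hms s' hrel => h ms hms s' hrel⟩

/-- An escaping system move together with the resulting state. -/
noncomputable def escPair (G : GameStructure S Me Ms) (X : Set S) (s : S) (me : Me) :
    Ms × S :=
  if h : ∃ ms, ms ∈ enabledS G s me ∧ ∃ s', G.rel s me ms s' ∧ s' ∉ X then
    (h.choose, h.choose_spec.2.choose)
  else ((G.exists_succ s).choose_spec.choose, s)

lemma escPair_spec (G : GameStructure S Me Ms) (X : Set S) (s : S) (me : Me)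
    (h : ∃ ms, ms ∈ enabledS G s me ∧ ∃ s', G.rel s me ms s' ∧ s' ∉ X) :
    (escPair G X s me).1 ∈ enabledS G s me ∧
      G.rel s me (escPair G X s me).1 (escPair G X s me).2 ∧
      (escPair G X s me).2 ∉ X := by
  unfold escPair
  rw [dif_pos h]
  exact ⟨h.choose_spec.1, h.choose_spec.2.choose_spec.1, h.choose_spec.2.choose_spec.2⟩

/-- The play (history together with current state) built by letting the system escape
the set `X` against the environment strategy `σ`. -/
noncomputable def playAux (G : GameStructure S Me Ms) (σ : EnvStrategy G) (X : Set S)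
    (init : S) : ℕ → List S × S
  | 0 => ([], init)
  | n + 1 =>
    let p := playAux G σ X init n
    (p.1 ++ [p.2], (escPair G X p.2 (σ.act p.1 p.2)).2)

/-- Proposition 5.1 (correctness of the symbolic attractor computation, environment
player): if the iteration `a 1 = d`, `a (n+1) = a n ∪ CPre_Env(a n)` stabilizes at step
`N ≥ 1`, then `a N` is exactly the environment attractor of `d`. -/
theorem attractor_iteration_sound_env (G : GameStructure S Me Ms) (d : Set S)
    (a : ℕ → Set S)
    (h1 : a 1 = d)
    (hstep : ∀ n : ℕ, 1 ≤ n → a (n + 1) = a n ∪ cpreEnv G (a n))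
    (N : ℕ) (hN : 1 ≤ N) (hfix : a (N + 1) = a N) :
    a N = attrEnv G d := by
  classical
  have hmono : ∀ m n : ℕ, 1 ≤ m → m ≤ n → a m ⊆ a n := by
    intro m n hm hmn
    induction n, hmn using Nat.le_induction with
    | base => exact subset_rfl
    | succ n hn ih =>
      refine ih.trans ?_
      rw [hstep n (le_trans hm hn)]
      exact Set.subset_union_left
  have hconst : ∀ n : ℕ, N ≤ n → a n = a N := by
    intro n hn
    induction n, hn using Nat.le_induction with
    | base => rfl
    | succ n hn ih =>
      rw [hstep n (le_trans hN hn), ih, ← hstep N hN, hfix]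
  have hsub : ∀ n : ℕ, a (n + 1) ⊆ a N := by
    intro n
    rcases le_or_gt (n + 1) N with h | h
    · exact hmono (n + 1) N (by omega) h
    · rw [hconst (n + 1) (by omega)]
  have hdA : d ⊆ a N := by rw [← h1]; exact hmono 1 N le_rfl hN
  have hcpreA : cpreEnv G (a N) ⊆ a N := by
    intro s hs
    rw [← hfix, hstep N hN]
    exact Or.inr hs
  have hrk_mem : ∀ s ∈ a N, s ∈ a (rk a s + 1) := by
    intro s hs
    have h' : sInf {n | s ∈ a (n + 1)} ∈ {n | s ∈ a (n + 1)} :=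
      Nat.sInf_mem ⟨N - 1, show s ∈ a (N - 1 + 1) by
        rwa [Nat.sub_add_cancel hN]⟩
    exact h'
  have hrk_le : ∀ (s : S) (n : ℕ), s ∈ a (n + 1) → rk a s ≤ n := fun s n h =>
    Nat.sInf_le (show n ∈ {k | s ∈ a (k + 1)} from h)
  have hrk_cpre : ∀ s ∈ a N, s ∉ d → s ∈ cpreEnv G (a (rk a s)) ∧ 1 ≤ rk a s := by
    intro s hs hsd
    have h0 : rk a s ≠ 0 := by
      intro h
      have hm := hrk_mem s hs
      rw [h, h1] at hm
      exact hsd hm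
    obtain ⟨m, hm⟩ := Nat.exists_eq_succ_of_ne_zero h0
    have hmem := hrk_mem s hs
    rw [hm] at hmem
    have hnot : s ∉ a (m + 1) := by
      intro hc
      have := hrk_le s m hc
      omega
    have hu : s ∈ a (m + 1) ∪ cpreEnv G (a (m + 1)) := by
      rw [← hstep (m + 1) (by omega)]
      exact hmem
    rcases hu with h | h
    · exact absurd h hnot
    · exact ⟨by rw [hm]; exact h, by omega⟩
  apply Set.Subset.antisymm
  · -- soundness: a N ⊆ attrEnv G d
    intro s hs
    refine ⟨⟨fun _ t => attMove G a t, fun _ t => attMove_enabled G a t⟩, ?_⟩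
    intro π hπ0 hplay
    have key : ∀ m n : ℕ, π n ∈ a N → rk a (π n) ≤ m → ∃ k, π k ∈ d := by
      intro m
      induction m with
      | zero =>
        intro n hA hle
        have h0 : rk a (π n) = 0 := Nat.le_zero.mp hle
        have hm := hrk_mem _ hA
        rw [h0, h1] at hm
        exact ⟨n, hm⟩
      | succ m ih =>
        intro n hA hle
        by_cases hd : π n ∈ d
        · exact ⟨n, hd⟩
        · obtain ⟨hcp, hge⟩ := hrk_cpre (π n) hA hd
          obtain ⟨ms, hms, hrel⟩ := hplay n
          have hnext : π (n + 1) ∈ a (rk a (π n)) :=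
            attMove_spec G a (π n) hcp ms hms _ hrel
          have hA' : π (n + 1) ∈ a N := by
            have h' := hsub (rk a (π n) - 1)
            rw [Nat.sub_add_cancel hge] at h'
            exact h' hnext
          have hle' : rk a (π (n + 1)) ≤ m := by
            have h' := hrk_le (π (n + 1)) (rk a (π n) - 1)
              (by rwa [Nat.sub_add_cancel hge])
            omega
          exact ih (n + 1) hA' hle'
    exact key (rk a (π 0)) 0 (by rw [hπ0]; exact hs) le_rfl
  · -- completeness: attrEnv G d ⊆ a N
    intro s hs
    by_contra hA
    obtain ⟨σ, hσ⟩ := hs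
    set π : ℕ → S := fun n => (playAux G σ (a N) s n).2 with hπ
    have hist : ∀ n : ℕ, (List.range n).map π = (playAux G σ (a N) s n).1 := by
      intro n
      induction n with
      | zero => simp [playAux]
      | succ n ih =>
        rw [List.range_succ, List.map_append, ih]
        rfl
    have hout : ∀ n : ℕ, π n ∉ a N := by
      intro n
      induction n with
      | zero => exact hA
      | succ n ih =>
        have hesc := escPair_spec G (a N) (π n)
          (σ.act (playAux G σ (a N) s n).1 (π n))
          (escape_exists G (a N) (π n) (fun hc => ih (hcpreA hc)) _
            (σ.act_enabled _ _))
        exact hesc.2.2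
    have hplay : EnvPlay G σ π := by
      intro n
      rw [hist n]
      have hesc := escPair_spec G (a N) (π n)
        (σ.act (playAux G σ (a N) s n).1 (π n))
        (escape_exists G (a N) (π n) (fun hc => hout n (hcpreA hc)) _
          (σ.act_enabled _ _))
      exact ⟨_, hesc.1, hesc.2.1⟩
    obtain ⟨k, hk⟩ := hσ π rfl hplay
    exact hout k (hdA hk)
end

section
/- Let G = (S, M_e, M_s, ρ) be a game structure, d ⊆ S, and X ⊆ S. If d ⊆ X and CPre_Sys(X) ⊆ X, then Attr_Sys(d) ⊆ X. -/
variable {S Me Ms : Type*}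

/-- Every set containing the target set `d` and closed under the system controllable
predecessor operator contains the system attractor of `d`. -/
theorem attrSys_subset_of_closed (G : GameStructure S Me Ms) (d X : Set S)
    (hd : d ⊆ X) (hX : cpreSys G X ⊆ X) :
    attrSys G d ⊆ X := by
  intro s hs
  by_contra hsX
  obtain ⟨σ, hσ⟩ := hs
  classical
  have key : ∀ (h : List S) (t : S), t ∉ X →
      ∃ s' : S, s' ∉ X ∧ ∃ me ∈ enabledE G t, G.rel t me (σ.act h t me) s' := by
    intro h t ht
    have hnc : t ∉ cpreSys G X := fun hc => ht (hX hc)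
    simp only [cpreSys, Set.mem_setOf_eq] at hnc
    push_neg at hnc
    obtain ⟨me, hme, hall⟩ := hnc
    obtain ⟨s', hrel, hs'⟩ := hall (σ.act h t me) (σ.act_enabled h t me hme)
    exact ⟨s', hs', me, hme, hrel⟩
  let p : ℕ → {q : List S × S // q.2 ∉ X} := fun n =>
    Nat.rec ⟨([], s), hsX⟩
      (fun _ q => ⟨(q.1.1 ++ [q.1.2], (key q.1.1 q.1.2 q.2).choose),
        (key q.1.1 q.1.2 q.2).choose_spec.1⟩) n
  let π : ℕ → S := fun n => (p n).1.2
  have hist : ∀ n, (p n).1.1 = (List.range n).map π := by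
    intro n
    induction n with
    | zero => rfl
    | succ n ih =>
      have : (p (n + 1)).1.1 = (p n).1.1 ++ [(p n).1.2] := rfl
      rw [this, ih, List.range_succ, List.map_append, List.map_singleton]
  have hplay : SysPlay G σ π := by
    intro n
    obtain ⟨me, hme, hrel⟩ := (key (p n).1.1 (p n).1.2 (p n).2).choose_spec.2
    have hnext : π (n + 1) = (key (p n).1.1 (p n).1.2 (p n).2).choose := rfl
    refine ⟨me, hme, ?_⟩
    rw [hnext, ← hist n]
    exact hrel
  obtain ⟨n, hn⟩ := hσ π rfl hplay
  exact (p n).2 (hd hn)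
end

section
/- Let G = (S, M_e, M_s, ρ) be a game structure and d ⊆ S. Then Attr_Sys(d) = d ∪ CPre_Sys(Attr_Sys(d)). -/
variable {S Me Ms : Type*}

attribute [local instance] Classical.propDecidable

/-- A trivial system strategy: always pick some enabled move if possible. -/
noncomputable def trivStrat (G : GameStructure S Me Ms) (ms0 : Ms) : SysStrategy G where
  act := fun _ cur m => if hm : m ∈ enabledE G cur then hm.choose else ms0
  act_enabled := by
    intro h cur m hm
    simp only [dif_pos hm]
    exact hm.choose_spec

/-- Choice of a system move keeping the play inside the attractor, if possible. -/
noncomputable def cChoice (G : GameStructure S Me Ms) (d : Set S) (ms0 : Ms)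
    (cur : S) (m : Me) : Ms :=
  if h : ∃ ms ∈ enabledS G cur m, ∀ s', G.rel cur m ms s' → s' ∈ attrSys G d
  then h.choose
  else if hm : m ∈ enabledE G cur then hm.choose else ms0

lemma cChoice_enabled (G : GameStructure S Me Ms) (d : Set S) (ms0 : Ms)
    (cur : S) (m : Me) (hm : m ∈ enabledE G cur) :
    cChoice G d ms0 cur m ∈ enabledS G cur m := by
  unfold cChoice
  split
  · next hh => exact hh.choose_spec.1
  · exact hm.choose_spec

lemma cChoice_spec (G : GameStructure S Me Ms) (d : Set S) (ms0 : Ms)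
    (cur : S) (m : Me)
    (h : ∃ ms ∈ enabledS G cur m, ∀ s', G.rel cur m ms s' → s' ∈ attrSys G d) :
    ∀ s', G.rel cur m (cChoice G d ms0 cur m) s' → s' ∈ attrSys G d := by
  unfold cChoice
  rw [dif_pos h]
  exact h.choose_spec.2

/-- A winning strategy from `t` if `t` is in the attractor, otherwise trivial. -/
noncomputable def Fstrat (G : GameStructure S Me Ms) (d : Set S) (ms0 : Ms)
    (t : S) : SysStrategy G :=
  if h : t ∈ attrSys G d then h.choose else trivStrat G ms0

lemma Fstrat_wins (G : GameStructure S Me Ms) (d : Set S) (ms0 : Ms)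
    (t : S) (ht : t ∈ attrSys G d) :
    ∀ π : ℕ → S, π 0 = t → SysPlay G (Fstrat G d ms0 t) π → ∃ n, π n ∈ d := by
  unfold Fstrat
  rw [dif_pos ht]
  exact ht.choose_spec

/-- The combined strategy: at the first step use `cChoice`, afterwards follow the
winning strategy of the second state of the play. -/
noncomputable def combStrat (G : GameStructure S Me Ms) (d : Set S) (ms0 : Ms) :
    SysStrategy G where
  act := fun h cur m => match h with
    | [] => cChoice G d ms0 cur m
    | _ :: t => (Fstrat G d ms0 (t.headD cur)).act t cur m
  act_enabled := by
    intro h cur m hm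
    match h with
    | [] => exact cChoice_enabled G d ms0 cur m hm
    | x :: t => exact (Fstrat G d ms0 (t.headD cur)).act_enabled t cur m hm

lemma range_succ_map (π : ℕ → S) (n : ℕ) :
    (List.range (n+1)).map π = π 0 :: (List.range n).map (fun k => π (k+1)) := by
  rw [List.range_succ_eq_map, List.map_cons, List.map_map]
  rfl

/-- The fixpoint property of the system attractor:
`Attr_Sys(d) = d ∪ CPre_Sys(Attr_Sys(d))`. -/
theorem attrSys_fixpoint (G : GameStructure S Me Ms) (d : Set S) :
    attrSys G d = d ∪ cpreSys G (attrSys G d) := by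
  classical
  apply Set.Subset.antisymm
  · -- attr ⊆ d ∪ cpre attr
    intro s hs
    by_cases hd : s ∈ d
    · exact Or.inl hd
    · right
      obtain ⟨σ, hσ⟩ := hs
      intro me hme
      refine ⟨σ.act [] s me, σ.act_enabled [] s me hme, ?_⟩
      intro s' hrel
      refine ⟨⟨fun h cur m => σ.act (s :: h) cur m,
        fun h cur m hm => σ.act_enabled (s :: h) cur m hm⟩, ?_⟩
      intro π' hπ0 hplay
      set π : ℕ → S := fun n => Nat.rec s (fun k _ => π' k) n with hπdef
      have hplayπ : SysPlay G σ π := by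
        intro n
        cases n with
        | zero =>
          refine ⟨me, hme, ?_⟩
          show G.rel s me (σ.act (List.map π []) s me) (π' 0)
          rw [hπ0]
          exact hrel
        | succ n =>
          obtain ⟨m, hm, hr⟩ := hplay n
          refine ⟨m, hm, ?_⟩
          rw [range_succ_map]
          exact hr
      obtain ⟨k, hk⟩ := hσ π rfl hplayπ
      cases k with
      | zero => exact absurd hk hd
      | succ m => exact ⟨m, hk⟩
  · -- d ∪ cpre attr ⊆ attr
    intro s hs
    obtain ⟨me0, ms0, s0, h0⟩ := G.exists_succ s
    rcases hs with hd | hcp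
    · exact ⟨trivStrat G ms0, fun π h0' _ => ⟨0, by rw [h0']; exact hd⟩⟩
    · refine ⟨combStrat G d ms0, ?_⟩
      intro π hπ0 hplay
      -- step 0 of the play lands in the attractor
      obtain ⟨m, hm, hr⟩ := hplay 0
      rw [hπ0] at hm hr
      have hex : ∃ ms ∈ enabledS G s m, ∀ s', G.rel s m ms s' → s' ∈ attrSys G d :=
        hcp m hm
      have hcm : G.rel s m (cChoice G d ms0 s m) (π 1) := hr
      have hattr1 : π 1 ∈ attrSys G d := cChoice_spec G d ms0 s m hex (π 1) hcm
      -- the shifted play is consistent with the winning strategy from π 1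
      have hplay' : SysPlay G (Fstrat G d ms0 (π 1)) (fun k => π (k+1)) := by
        intro n
        obtain ⟨m', hm', hr'⟩ := hplay (n+1)
        rw [range_succ_map] at hr'
        refine ⟨m', hm', ?_⟩
        have hhead : (((List.range n).map (fun k => π (k+1))).headD (π (n+1))) = π 1 := by
          cases n <;> simp [List.range_succ_eq_map]
        show G.rel (π (n+1)) m'
          ((Fstrat G d ms0 (π 1)).act ((List.range n).map (fun k => π (k+1)))
            (π (n+1)) m') (π (n+2))
        rw [← hhead]
        exact hr'
      obtain ⟨k, hk⟩ := Fstrat_wins G d ms0 (π 1) hattr1 (fun k => π (k+1)) rfl hplay'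
      exact ⟨k+1, hk⟩
end

section
/- Let G = (S, M_e, M_s, ρ) be a game structure and B ⊆ S. Define sequences of subsets of S by f(1) = B and, for n ≥ 1: a(n) = Attr_Sys(f(n)), w(n) = Attr_Env(S ∖ CPre_Sys(a(n))), and f(n+1) = f(n) ∖ w(n). If f(N+1) = f(N) for some N ≥ 1, then: (a) w(N) is exactly the set of states s from which Env has a strategy σ_e such that every play from s consistent with σ_e visits B at only finitely many positions (the Env winning region for the co-Büchi objective coBuchi(B)); and (b) S ∖ w(N) is exactly the set of states s from which Sys has a strategy σ_s such that every play from s consistent with σ_s visits B at infinitely many positions (the Sys winning region for the Büchi objective Buchi(B)). -/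
variable {S Me Ms : Type*}

section BuchiAux

variable {S Me Ms : Type*}

namespace BuchiAux

variable (G : GameStructure S Me Ms)

noncomputable def fbMe (s : S) : Me := (G.exists_succ s).choose

lemma fbMe_enabled (s : S) : fbMe G s ∈ enabledE G s := (G.exists_succ s).choose_spec

open Classical in
noncomputable def fbMs (s : S) (me : Me) : Ms :=
  if h : me ∈ enabledE G s then h.choose else (G.exists_succ s).choose_spec.choose

lemma fbMs_enabled (s : S) (me : Me) (h : me ∈ enabledE G s) :
    fbMs G s me ∈ enabledS G s me := by
  unfold fbMs
  rw [dif_pos h]; exact h.choose_spec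

variable {G}

lemma not_cpreSys {X : Set S} {s : S} (hs : s ∉ cpreSys G X) :
    ∃ me ∈ enabledE G s, ∀ ms ∈ enabledS G s me, ∀ s', G.rel s me ms s' → s' ∉ X := by
  simp only [cpreSys, Set.mem_setOf_eq] at hs
  push_neg at hs
  obtain ⟨me, hme, h⟩ := hs
  refine ⟨me, hme, fun ms hms s' hrel => ?_⟩
  obtain ⟨s'', hrel'', hs''⟩ := h ms hms
  rwa [G.deterministic s me ms s' s'' hrel hrel'']

lemma not_cpreEnv {X : Set S} {s : S} (hs : s ∉ cpreEnv G X) :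
    ∀ me ∈ enabledE G s, ∃ ms ∈ enabledS G s me, ∀ s', G.rel s me ms s' → s' ∉ X := by
  simp only [cpreEnv, Set.mem_setOf_eq] at hs
  push_neg at hs
  intro me hme
  obtain ⟨ms, hms, s'', hrel'', hs''⟩ := hs me hme
  refine ⟨ms, hms, fun s' hrel => ?_⟩
  rwa [G.deterministic s me ms s' s'' hrel hrel'']

/-- The joint play of an environment strategy and a system strategy. -/
noncomputable def jpAux (σe : EnvStrategy G) (σs : SysStrategy G) (s : S) : ℕ → List S × S
  | 0 => ([], s)
  | n+1 =>
    let p := jpAux σe σs s n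
    (p.1 ++ [p.2], Exists.choose (show ∃ s', G.rel p.2 (σe.act p.1 p.2)
      (σs.act p.1 p.2 (σe.act p.1 p.2)) s' from
        σs.act_enabled p.1 p.2 _ (σe.act_enabled p.1 p.2)))

noncomputable def jplay (σe : EnvStrategy G) (σs : SysStrategy G) (s : S) (n : ℕ) : S :=
  (jpAux σe σs s n).2

lemma jplay_zero (σe : EnvStrategy G) (σs : SysStrategy G) (s : S) : jplay σe σs s 0 = s := rfl

lemma jpAux_fst (σe : EnvStrategy G) (σs : SysStrategy G) (s : S) (n : ℕ) :
    (jpAux σe σs s n).1 = (List.range n).map (jplay σe σs s) := by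
  induction n with
  | zero => simp [jpAux]
  | succ n ih => simp [jpAux, List.range_succ, ih, jplay]

lemma jplay_rel (σe : EnvStrategy G) (σs : SysStrategy G) (s : S) (n : ℕ) :
    G.rel (jplay σe σs s n)
      (σe.act ((List.range n).map (jplay σe σs s)) (jplay σe σs s n))
      (σs.act ((List.range n).map (jplay σe σs s)) (jplay σe σs s n)
        (σe.act ((List.range n).map (jplay σe σs s)) (jplay σe σs s n)))
      (jplay σe σs s (n+1)) := by
  have h := Exists.choose_spec (show ∃ s', G.rel (jpAux σe σs s n).2
      (σe.act (jpAux σe σs s n).1 (jpAux σe σs s n).2)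
      (σs.act (jpAux σe σs s n).1 (jpAux σe σs s n).2
        (σe.act (jpAux σe σs s n).1 (jpAux σe σs s n).2)) s' from
    σs.act_enabled _ _ _ (σe.act_enabled _ _))
  have heq : jplay σe σs s (n+1) = Exists.choose (show ∃ s', G.rel (jpAux σe σs s n).2
      (σe.act (jpAux σe σs s n).1 (jpAux σe σs s n).2)
      (σs.act (jpAux σe σs s n).1 (jpAux σe σs s n).2
        (σe.act (jpAux σe σs s n).1 (jpAux σe σs s n).2)) s' from
    σs.act_enabled _ _ _ (σe.act_enabled _ _)) := rfl
  rw [heq]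
  rw [jpAux_fst] at h ⊢
  exact h

lemma jplay_sysPlay (σe : EnvStrategy G) (σs : SysStrategy G) (s : S) :
    SysPlay G σs (jplay σe σs s) := by
  intro n
  exact ⟨_, σe.act_enabled _ _, jplay_rel σe σs s n⟩

lemma jplay_envPlay (σe : EnvStrategy G) (σs : SysStrategy G) (s : S) :
    EnvPlay G σe (jplay σe σs s) := by
  intro n
  exact ⟨_, σs.act_enabled _ _ _ (σe.act_enabled _ _), jplay_rel σe σs s n⟩

end BuchiAux
end BuchiAux

section BuchiStages
universe u
variable {S : Type u}

namespace BuchiAux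

/-- Transfinite iteration stages of `X ↦ T ∪ C X`. -/
noncomputable def stg (C : Set S → Set S) (T : Set S) : Ordinal.{u} → Set S
  | o => T ∪ C (⋃ o' : {o' : Ordinal.{u} // o' < o}, stg C T o'.1)
termination_by o => o
decreasing_by exact o'.2

lemma stg_eq (C : Set S → Set S) (T : Set S) (o : Ordinal.{u}) :
    stg C T o = T ∪ C (⋃ o' : {o' : Ordinal.{u} // o' < o}, stg C T o'.1) := by
  rw [stg]

lemma stg_mono {C : Set S → Set S} (hC : Monotone C) (T : Set S)
    {o₁ o₂ : Ordinal.{u}} (h : o₁ ≤ o₂) : stg C T o₁ ⊆ stg C T o₂ := by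
  rw [stg_eq C T o₁, stg_eq C T o₂]
  refine Set.union_subset_union_right T (hC ?_)
  refine Set.iUnion_subset fun o' => ?_
  exact Set.subset_iUnion_of_subset ⟨o'.1, lt_of_lt_of_le o'.2 h⟩ subset_rfl

/-- The union of all stages. -/
noncomputable def stgU (C : Set S → Set S) (T : Set S) : Set S :=
  ⋃ o : Ordinal.{u}, stg C T o

lemma subset_stgU (C : Set S → Set S) (T : Set S) : T ⊆ stgU C T :=
  fun s hs => Set.mem_iUnion.2 ⟨0, by rw [stg_eq]; exact Or.inl hs⟩

/-- Rank of a state in the stages. -/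
noncomputable def stgRank (C : Set S → Set S) (T : Set S) (s : S) : Ordinal.{u} :=
  sInf {o | s ∈ stg C T o}

lemma mem_stg_rank {C : Set S → Set S} {T : Set S} {s : S} (hs : s ∈ stgU C T) :
    s ∈ stg C T (stgRank C T s) := by
  obtain ⟨o, ho⟩ := Set.mem_iUnion.1 hs
  exact csInf_mem (⟨o, ho⟩ : {o | s ∈ stg C T o}.Nonempty)

lemma stgRank_le {C : Set S → Set S} {T : Set S} {s : S} {o : Ordinal.{u}}
    (h : s ∈ stg C T o) : stgRank C T s ≤ o :=
  csInf_le (OrderBot.bddBelow _) h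

lemma stgU_subset_stage {C : Set S → Set S} (hC : Monotone C) (T : Set S) :
    stgU C T ⊆ stg C T (⨆ s : S, stgRank C T s) := by
  intro s hs
  exact stg_mono hC T (le_ciSup (Ordinal.bddAbove_range _) s) (mem_stg_rank hs)

lemma cpre_stgU_subset {C : Set S → Set S} (hC : Monotone C) (T : Set S) :
    C (stgU C T) ⊆ stgU C T := by
  set b := ⨆ s : S, stgRank C T s with hb
  intro s hs
  have h1 : C (stgU C T) ⊆ C (stg C T b) := hC (stgU_subset_stage hC T)
  have h2 : stg C T b ⊆ ⋃ o' : {o' : Ordinal.{u} // o' < Order.succ b}, stg C T o'.1 :=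
    Set.subset_iUnion_of_subset ⟨b, Order.lt_succ b⟩ subset_rfl
  have : s ∈ stg C T (Order.succ b) := by
    rw [stg_eq]
    exact Or.inr (hC h2 (h1 hs))
  exact Set.mem_iUnion.2 ⟨_, this⟩

lemma stg_rank_step {C : Set S → Set S} (hC : Monotone C) {T : Set S} {s : S}
    (hs : s ∈ stgU C T) (hsT : s ∉ T) :
    s ∈ C {x | x ∈ stgU C T ∧ stgRank C T x < stgRank C T s} := by
  have h := mem_stg_rank hs
  rw [stg_eq] at h
  rcases h with h | h
  · exact absurd h hsT
  · refine hC ?_ h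
    refine Set.iUnion_subset fun o' x hx => ?_
    exact ⟨Set.mem_iUnion.2 ⟨o'.1, hx⟩, lt_of_le_of_lt (stgRank_le hx) o'.2⟩

lemma no_rank_descent {C : Set S → Set S} {T : Set S} (g : ℕ → S)
    (h : ∀ n, stgRank C T (g (n+1)) < stgRank C T (g n)) : False :=
  RelEmbedding.not_wellFounded
    (RelEmbedding.natGT (fun n => stgRank C T (g n)) h) wellFounded_lt

end BuchiAux
end BuchiStages
section BuchiAttr
universe u
variable {S : Type u} {Me : Type*} {Ms : Type*}

namespace BuchiAux

variable {G : GameStructure S Me Ms}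

lemma cpreSys_mono (G : GameStructure S Me Ms) : Monotone (cpreSys G) := by
  intro X Y hXY s hs me hme
  obtain ⟨ms, hms, h⟩ := hs me hme
  exact ⟨ms, hms, fun s' hr => hXY (h s' hr)⟩

lemma cpreEnv_mono (G : GameStructure S Me Ms) : Monotone (cpreEnv G) := by
  intro X Y hXY s hs
  obtain ⟨me, hme, h⟩ := hs
  exact ⟨me, hme, fun ms hms s' hr => hXY (h ms hms s' hr)⟩

lemma attrSys_mono (G : GameStructure S Me Ms) {T T' : Set S} (h : T ⊆ T') :
    attrSys G T ⊆ attrSys G T' := by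
  rintro s ⟨σ, hσ⟩
  exact ⟨σ, fun π h0 hp => (hσ π h0 hp).imp fun n hn => h hn⟩

lemma attrEnv_mono (G : GameStructure S Me Ms) {T T' : Set S} (h : T ⊆ T') :
    attrEnv G T ⊆ attrEnv G T' := by
  rintro s ⟨σ, hσ⟩
  exact ⟨σ, fun π h0 hp => (hσ π h0 hp).imp fun n hn => h hn⟩

open Classical in
/-- If a set `Uᶜ` is an Env-trap, Env can keep any play inside `Uᶜ`. -/
lemma sys_escape {U : Set S} (G : GameStructure S Me Ms)
    (hcl : ∀ x, x ∉ U → ∃ me ∈ enabledE G x,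
      ∀ ms ∈ enabledS G x me, ∀ s', G.rel x me ms s' → s' ∉ U) :
    ∃ σe : EnvStrategy G, ∀ π : ℕ → S, EnvPlay G σe π → π 0 ∉ U → ∀ n, π n ∉ U := by
  refine ⟨⟨fun _ x => if h : x ∉ U then (hcl x h).choose else fbMe G x, fun h x => ?_⟩, ?_⟩
  · skip
    by_cases hx : x ∉ U
    · rw [dif_pos hx]; exact (hcl x hx).choose_spec.1
    · rw [dif_neg hx]; exact fbMe_enabled G x
  · intro π hπ h0 n
    induction n with
    | zero => exact h0
    | succ n ih =>
      obtain ⟨ms, hms, hrel⟩ := hπ n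
      dsimp only at hms hrel
      rw [show (if h : (π n) ∉ U then (hcl (π n) h).choose else fbMe G (π n))
          = (hcl (π n) ih).choose from dif_pos ih] at hms hrel
      exact (hcl (π n) ih).choose_spec.2 ms hms (π (n+1)) hrel

open Classical in
/-- If a set `Uᶜ` is a Sys-trap, Sys can keep any play inside `Uᶜ`. -/
lemma env_escape {U : Set S} (G : GameStructure S Me Ms)
    (hcl : ∀ x, x ∉ U → ∀ me ∈ enabledE G x, ∃ ms ∈ enabledS G x me,
      ∀ s', G.rel x me ms s' → s' ∉ U) :
    ∃ σs : SysStrategy G, ∀ π : ℕ → S, SysPlay G σs π → π 0 ∉ U → ∀ n, π n ∉ U := by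
  refine ⟨⟨fun _ x me => if h : x ∉ U ∧ me ∈ enabledE G x then (hcl x h.1 me h.2).choose
    else fbMs G x me, fun h x me hme => ?_⟩, ?_⟩
  · skip
    by_cases hx : x ∉ U ∧ me ∈ enabledE G x
    · rw [dif_pos hx]; exact (hcl x hx.1 me hx.2).choose_spec.1
    · rw [dif_neg hx]; exact fbMs_enabled G x me hme
  · intro π hπ h0 n
    induction n with
    | zero => exact h0
    | succ n ih =>
      obtain ⟨me, hme, hrel⟩ := hπ n
      dsimp only at hrel
      rw [show (if h : (π n) ∉ U ∧ me ∈ enabledE G (π n) then (hcl (π n) h.1 me h.2).choose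
          else fbMs G (π n) me) = (hcl (π n) ih me hme).choose from dif_pos ⟨ih, hme⟩] at hrel
      exact (hcl (π n) ih me hme).choose_spec.2 (π (n+1)) hrel

lemma attrSys_subset_stgU (G : GameStructure S Me Ms) (T : Set S) :
    attrSys G T ⊆ stgU (cpreSys G) T := by
  intro s hs
  by_contra hsU
  obtain ⟨σs, hσ⟩ := hs
  obtain ⟨σe, hesc⟩ := sys_escape G (U := stgU (cpreSys G) T) (fun x hx =>
    not_cpreSys (fun hc => hx (cpre_stgU_subset (cpreSys_mono G) T hc)))
  obtain ⟨n, hn⟩ := hσ (jplay σe σs s) rfl (jplay_sysPlay σe σs s)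
  exact hesc (jplay σe σs s) (jplay_envPlay σe σs s) hsU n (subset_stgU _ _ hn)

lemma attrEnv_subset_stgU (G : GameStructure S Me Ms) (T : Set S) :
    attrEnv G T ⊆ stgU (cpreEnv G) T := by
  intro s hs
  by_contra hsU
  obtain ⟨σe, hσ⟩ := hs
  obtain ⟨σs, hesc⟩ := env_escape G (U := stgU (cpreEnv G) T) (fun x hx =>
    not_cpreEnv (fun hc => hx (cpre_stgU_subset (cpreEnv_mono G) T hc)))
  obtain ⟨n, hn⟩ := hσ (jplay σe σs s) rfl (jplay_envPlay σe σs s)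
  exact hesc (jplay σe σs s) (jplay_sysPlay σe σs s) hsU n (subset_stgU _ _ hn)

open Classical in
lemma stgU_subset_attrSys (G : GameStructure S Me Ms) (T : Set S) :
    stgU (cpreSys G) T ⊆ attrSys G T := by
  set U := stgU (cpreSys G) T with hU
  set rk := stgRank (cpreSys G) T with hrk
  have key : ∀ x, x ∈ U ∧ x ∉ T → ∀ me, me ∈ enabledE G x → ∃ ms ∈ enabledS G x me,
      ∀ s', G.rel x me ms s' → s' ∈ U ∧ rk s' < rk x := fun x hx me hme =>
    stg_rank_step (cpreSys_mono G) hx.1 hx.2 me hme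
  intro s hs
  refine ⟨⟨fun _ x me => if h : (x ∈ U ∧ x ∉ T) ∧ me ∈ enabledE G x
    then (key x h.1 me h.2).choose else fbMs G x me, fun h x me hme => ?_⟩, ?_⟩
  · skip
    by_cases hx : (x ∈ U ∧ x ∉ T) ∧ me ∈ enabledE G x
    · rw [dif_pos hx]; exact (key x hx.1 me hx.2).choose_spec.1
    · rw [dif_neg hx]; exact fbMs_enabled G x me hme
  · intro π h0 hπ
    by_contra hnoT
    push_neg at hnoT
    have step : ∀ n, π n ∈ U → π (n+1) ∈ U ∧ rk (π (n+1)) < rk (π n) := by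
      intro n hn
      obtain ⟨me, hme, hrel⟩ := hπ n
      dsimp only at hrel
      rw [show (if h : ((π n) ∈ U ∧ (π n) ∉ T) ∧ me ∈ enabledE G (π n)
          then (key (π n) h.1 me h.2).choose else fbMs G (π n) me)
          = (key (π n) ⟨hn, hnoT n⟩ me hme).choose
          from dif_pos ⟨⟨hn, hnoT n⟩, hme⟩] at hrel
      exact (key (π n) ⟨hn, hnoT n⟩ me hme).choose_spec.2 (π (n+1)) hrel
    have hInv : ∀ n, π n ∈ U := by
      intro n
      induction n with
      | zero => rw [h0]; exact hs
      | succ n ih => exact (step n ih).1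
    exact no_rank_descent π (fun n => (step n (hInv n)).2)

open Classical in
lemma stgU_subset_attrEnv (G : GameStructure S Me Ms) (T : Set S) :
    stgU (cpreEnv G) T ⊆ attrEnv G T := by
  set U := stgU (cpreEnv G) T with hU
  set rk := stgRank (cpreEnv G) T with hrk
  have key : ∀ x, x ∈ U ∧ x ∉ T → ∃ me ∈ enabledE G x, ∀ ms ∈ enabledS G x me,
      ∀ s', G.rel x me ms s' → s' ∈ U ∧ rk s' < rk x := fun x hx =>
    stg_rank_step (cpreEnv_mono G) hx.1 hx.2
  intro s hs
  refine ⟨⟨fun _ x => if h : x ∈ U ∧ x ∉ T then (key x h).choose else fbMe G x,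
    fun h x => ?_⟩, ?_⟩
  · skip
    by_cases hx : x ∈ U ∧ x ∉ T
    · rw [dif_pos hx]; exact (key x hx).choose_spec.1
    · rw [dif_neg hx]; exact fbMe_enabled G x
  · intro π h0 hπ
    by_contra hnoT
    push_neg at hnoT
    have step : ∀ n, π n ∈ U → π (n+1) ∈ U ∧ rk (π (n+1)) < rk (π n) := by
      intro n hn
      obtain ⟨ms, hms, hrel⟩ := hπ n
      dsimp only at hms hrel
      rw [show (if h : (π n) ∈ U ∧ (π n) ∉ T then (key (π n) h).choose else fbMe G (π n))
          = (key (π n) ⟨hn, hnoT n⟩).choose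
          from dif_pos ⟨hn, hnoT n⟩] at hms hrel
      exact (key (π n) ⟨hn, hnoT n⟩).choose_spec.2 ms hms (π (n+1)) hrel
    have hInv : ∀ n, π n ∈ U := by
      intro n
      induction n with
      | zero => rw [h0]; exact hs
      | succ n ih => exact (step n ih).1
    exact no_rank_descent π (fun n => (step n (hInv n)).2)

lemma attrSys_eq_stgU (G : GameStructure S Me Ms) (T : Set S) :
    attrSys G T = stgU (cpreSys G) T :=
  Set.Subset.antisymm (attrSys_subset_stgU G T) (stgU_subset_attrSys G T)

lemma attrEnv_eq_stgU (G : GameStructure S Me Ms) (T : Set S) :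
    attrEnv G T = stgU (cpreEnv G) T :=
  Set.Subset.antisymm (attrEnv_subset_stgU G T) (stgU_subset_attrEnv G T)

lemma subset_attrSys (G : GameStructure S Me Ms) (T : Set S) : T ⊆ attrSys G T := by
  rw [attrSys_eq_stgU]; exact subset_stgU _ _

lemma subset_attrEnv (G : GameStructure S Me Ms) (T : Set S) : T ⊆ attrEnv G T := by
  rw [attrEnv_eq_stgU]; exact subset_stgU _ _

lemma cpreSys_attrSys_subset (G : GameStructure S Me Ms) (T : Set S) :
    cpreSys G (attrSys G T) ⊆ attrSys G T := by
  rw [attrSys_eq_stgU]; exact cpre_stgU_subset (cpreSys_mono G) T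

lemma cpreEnv_attrEnv_subset (G : GameStructure S Me Ms) (T : Set S) :
    cpreEnv G (attrEnv G T) ⊆ attrEnv G T := by
  rw [attrEnv_eq_stgU]; exact cpre_stgU_subset (cpreEnv_mono G) T

end BuchiAux
end BuchiAttr
section BuchiMainAux
universe u
variable {S : Type u} {Me : Type*} {Ms : Type*}

namespace BuchiAux

open Classical in
/-- From any state of `cpreSys G (attrSys G F)`, when `F` can always re-enter it,
Sys wins the Büchi objective for any `B ⊇ F`. -/
lemma sys_buchi (G : GameStructure S Me Ms) (F B : Set S)
    (hFc : F ⊆ cpreSys G (attrSys G F)) (hFB : F ⊆ B)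
    {s : S} (hs : s ∈ cpreSys G (attrSys G F)) :
    ∃ σs : SysStrategy G, ∀ π : ℕ → S, π 0 = s → SysPlay G σs π →
      {n : ℕ | π n ∈ B}.Infinite := by
  set A := attrSys G F with hA
  have hAU : A = stgU (cpreSys G) F := attrSys_eq_stgU G F
  set rk := stgRank (cpreSys G) F with hrk
  have key1 : ∀ x, x ∈ A ∧ x ∉ F → ∀ me, me ∈ enabledE G x → ∃ ms ∈ enabledS G x me,
      ∀ s', G.rel x me ms s' → s' ∈ A ∧ rk s' < rk x := by
    intro x hx me hme
    have h := stg_rank_step (cpreSys_mono G) (hAU ▸ hx.1) hx.2 me hme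
    obtain ⟨ms, hms, h'⟩ := h
    exact ⟨ms, hms, fun s' hr => ⟨hAU ▸ (h' s' hr).1, (h' s' hr).2⟩⟩
  have key2 : ∀ x, x ∈ cpreSys G A → ∀ me, me ∈ enabledE G x → ∃ ms ∈ enabledS G x me,
      ∀ s', G.rel x me ms s' → s' ∈ A := fun x hx => hx
  refine ⟨⟨fun _ x me => if h : (x ∈ A ∧ x ∉ F) ∧ me ∈ enabledE G x
      then (key1 x h.1 me h.2).choose
      else if h2 : x ∈ cpreSys G A ∧ me ∈ enabledE G x then (key2 x h2.1 me h2.2).choose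
      else fbMs G x me, fun h x me hme => ?_⟩, ?_⟩
  · skip
    by_cases h1 : (x ∈ A ∧ x ∉ F) ∧ me ∈ enabledE G x
    · rw [dif_pos h1]; exact (key1 x h1.1 me h1.2).choose_spec.1
    · rw [dif_neg h1]
      by_cases h2 : x ∈ cpreSys G A ∧ me ∈ enabledE G x
      · rw [dif_pos h2]; exact (key2 x h2.1 me h2.2).choose_spec.1
      · rw [dif_neg h2]; exact fbMs_enabled G x me hme
  · intro π h0 hπ
    have hstep : ∀ n, (π n ∈ A ∨ π n ∈ cpreSys G A) →
        π (n+1) ∈ A ∧ (π n ∈ A → π n ∉ F → rk (π (n+1)) < rk (π n)) := by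
      intro n hc
      obtain ⟨me, hme, hrel⟩ := hπ n
      dsimp only at hrel
      by_cases h1 : (π n ∈ A ∧ π n ∉ F) ∧ me ∈ enabledE G (π n)
      · rw [dif_pos h1] at hrel
        have h' := (key1 (π n) h1.1 me h1.2).choose_spec.2 (π (n+1)) hrel
        exact ⟨h'.1, fun _ _ => h'.2⟩
      · rw [dif_neg h1] at hrel
        have h2 : π n ∈ cpreSys G A ∧ me ∈ enabledE G (π n) := by
          refine ⟨?_, hme⟩
          rcases hc with hcA | hcc
          · by_cases hF : π n ∈ F
            · exact hFc hF
            · exact absurd ⟨⟨hcA, hF⟩, hme⟩ h1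
          · exact hcc
        rw [dif_pos h2] at hrel
        have h' := (key2 (π n) h2.1 me h2.2).choose_spec.2 (π (n+1)) hrel
        exact ⟨h', fun hA' hF' => absurd ⟨⟨hA', hF'⟩, hme⟩ h1⟩
    have hInv : ∀ n, π n ∈ A ∨ π n ∈ cpreSys G A := by
      intro n
      induction n with
      | zero => exact Or.inr (h0 ▸ hs)
      | succ n ih => exact Or.inl (hstep n ih).1
    by_contra hninf
    rw [Set.not_infinite] at hninf
    have hfin := hninf
    obtain ⟨m, hm⟩ := hfin.bddAbove
    have hexF : ∃ k, m < k ∧ π k ∈ F := by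
      by_contra hno
      push_neg at hno
      refine no_rank_descent (C := cpreSys G) (T := F) (fun i => π (m + 1 + i)) (fun i => ?_)
      have hA1 : π (m + 1 + i) ∈ A := by
        have : m + 1 + i = (m + i) + 1 := by omega
        rw [this]
        exact (hstep (m + i) (hInv (m + i))).1
      have hF1 : π (m + 1 + i) ∉ F := hno _ (by omega)
      exact (hstep (m + 1 + i) (Or.inl hA1)).2 hA1 hF1
    obtain ⟨k, hk, hkF⟩ := hexF
    exact absurd (hm (Set.mem_setOf_eq ▸ hFB hkF : k ∈ {n | π n ∈ B})) (by omega)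

open Classical in
/-- From any state of `w N`, Env wins the co-Büchi objective. -/
lemma env_cobuchi (G : GameStructure S Me Ms) (B : Set S) (f a w : ℕ → Set S)
    (N : ℕ) (hN : 1 ≤ N)
    (hf1 : f 1 = B)
    (ha : ∀ n : ℕ, 1 ≤ n → a n = attrSys G (f n))
    (hw : ∀ n : ℕ, 1 ≤ n → w n = attrEnv G (cpreSys G (a n))ᶜ)
    (hwmono : ∀ m n : ℕ, 1 ≤ m → m ≤ n → w m ⊆ w n)
    (hBf : ∀ n : ℕ, 2 ≤ n → B ⊆ f n ∪ w (n-1))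
    {s : S} (hs : s ∈ w N) :
    ∃ σe : EnvStrategy G, ∀ π : ℕ → S, π 0 = s → EnvPlay G σe π →
      {n : ℕ | π n ∈ B}.Finite := by
  set D : ℕ → Set S := fun n => (cpreSys G (a n))ᶜ with hD
  have hwUE : ∀ n, 1 ≤ n → w n = stgU (cpreEnv G) (D n) := fun n hn =>
    (hw n hn).trans (attrEnv_eq_stgU G (D n))
  have hDw : ∀ n, 1 ≤ n → D n ⊆ w n := fun n hn => (hw n hn) ▸ subset_attrEnv G (D n)
  have hacl : ∀ n, 1 ≤ n → (a n)ᶜ ⊆ D n := by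
    intro n hn
    apply Set.compl_subset_compl.2
    rw [ha n hn]
    exact cpreSys_attrSys_subset G (f n)
  have hfa : ∀ n, 1 ≤ n → f n ⊆ a n := fun n hn => (ha n hn) ▸ subset_attrSys G (f n)
  set lv : S → ℕ := fun x => sInf {n | 1 ≤ n ∧ n ≤ N ∧ x ∈ w n} with hlvdef
  have hlv : ∀ x, x ∈ w N → 1 ≤ lv x ∧ lv x ≤ N ∧ x ∈ w (lv x) := fun x hx =>
    Nat.sInf_mem (⟨N, hN, le_refl N, hx⟩ : {n | 1 ≤ n ∧ n ≤ N ∧ x ∈ w n}.Nonempty)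
  have hlv_le : ∀ x n, 1 ≤ n → n ≤ N → x ∈ w n → lv x ≤ n := fun x n h1 h2 h3 =>
    Nat.sInf_le ⟨h1, h2, h3⟩
  have key : ∀ x, x ∈ w N → ∃ me ∈ enabledE G x, ∀ ms ∈ enabledS G x me,
      ∀ s', G.rel x me ms s' → s' ∈ w (lv x) ∧ (x ∈ D (lv x) → s' ∉ a (lv x) ∧ s' ∈ D (lv x))
        ∧ (x ∉ D (lv x) → s' ∈ stgU (cpreEnv G) (D (lv x)) ∧
            stgRank (cpreEnv G) (D (lv x)) s' < stgRank (cpreEnv G) (D (lv x)) x) := by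
    intro x hx
    obtain ⟨h1, hN', hxw⟩ := hlv x hx
    by_cases hDx : x ∈ D (lv x)
    · obtain ⟨me, hme, hspec⟩ := not_cpreSys (X := a (lv x)) hDx
      refine ⟨me, hme, fun ms hms s' hrel => ?_⟩
      have hna := hspec ms hms s' hrel
      exact ⟨hDw _ h1 (hacl _ h1 hna), fun _ => ⟨hna, hacl _ h1 hna⟩,
        fun h => absurd hDx h⟩
    · have hxU : x ∈ stgU (cpreEnv G) (D (lv x)) := (hwUE _ h1) ▸ hxw
      obtain ⟨me, hme, hspec⟩ := stg_rank_step (cpreEnv_mono G) hxU hDx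
      refine ⟨me, hme, fun ms hms s' hrel => ?_⟩
      have h' := hspec ms hms s' hrel
      exact ⟨(hwUE _ h1).symm ▸ h'.1, fun hc => absurd hc hDx, fun _ => ⟨h'.1, h'.2⟩⟩
  refine ⟨⟨fun _ x => if h : x ∈ w N then (key x h).choose else fbMe G x,
    fun h x => ?_⟩, ?_⟩
  · skip
    by_cases hx : x ∈ w N
    · rw [dif_pos hx]; exact (key x hx).choose_spec.1
    · rw [dif_neg hx]; exact fbMe_enabled G x
  · intro π h0 hπ
    have hstep : ∀ n, π n ∈ w N → π (n+1) ∈ w (lv (π n))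
        ∧ (π n ∈ D (lv (π n)) → π (n+1) ∉ a (lv (π n)) ∧ π (n+1) ∈ D (lv (π n)))
        ∧ (π n ∉ D (lv (π n)) →
            π (n+1) ∈ stgU (cpreEnv G) (D (lv (π n))) ∧
            stgRank (cpreEnv G) (D (lv (π n))) (π (n+1)) <
              stgRank (cpreEnv G) (D (lv (π n))) (π n)) := by
      intro n hn
      obtain ⟨ms, hms, hrel⟩ := hπ n
      dsimp only at hms hrel
      rw [dif_pos hn] at hms hrel
      exact (key (π n) hn).choose_spec.2 ms hms (π (n+1)) hrel
    have hInv : ∀ n, π n ∈ w N := by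
      intro n
      induction n with
      | zero => exact h0 ▸ hs
      | succ n ih =>
        have h1 := (hlv (π n) ih)
        exact hwmono (lv (π n)) N h1.1 h1.2.1 ((hstep n ih).1)
    have hlv_mono : ∀ n, lv (π (n+1)) ≤ lv (π n) := by
      intro n
      have h1 := hlv (π n) (hInv n)
      exact hlv_le _ _ h1.1 h1.2.1 ((hstep n (hInv n)).1)
    have hlv_anti : ∀ m n, m ≤ n → lv (π n) ≤ lv (π m) := by
      intro m n hmn
      induction n, hmn using Nat.le_induction with
      | base => exact le_refl _
      | succ n hmn ih => exact le_trans (hlv_mono n) ih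
    obtain ⟨K, hK⟩ : ∃ K, lv (π K) = sInf (Set.range fun n => lv (π n)) := by
      have := Nat.sInf_mem (⟨lv (π 0), 0, rfl⟩ : (Set.range fun n => lv (π n)).Nonempty)
      obtain ⟨K, hK⟩ := this
      exact ⟨K, hK⟩
    set L := sInf (Set.range fun n => lv (π n)) with hLdef
    have hconst : ∀ n, K ≤ n → lv (π n) = L := fun n hn =>
      le_antisymm (hK ▸ hlv_anti K n hn) (Nat.sInf_le ⟨n, rfl⟩)
    have hL1 : 1 ≤ L := hK ▸ (hlv (π K) (hInv K)).1
    have hLN : L ≤ N := hK ▸ (hlv (π K) (hInv K)).2.1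
    obtain ⟨K', hKK', hK'D⟩ : ∃ K', K ≤ K' ∧ π K' ∈ D L := by
      by_contra hno
      push_neg at hno
      refine no_rank_descent (C := cpreEnv G) (T := D L) (fun i => π (K + i)) (fun i => ?_)
      have hi : lv (π (K + i)) = L := hconst (K + i) (by omega)
      have hnd : π (K + i) ∉ D (lv (π (K + i))) := by
        rw [hi]; exact hno _ (by omega)
      have h' := (hstep (K + i) (hInv (K + i))).2.2 hnd
      rw [hi] at h'
      exact h'.2
    have hAfter : ∀ i, π (K' + 1 + i) ∉ a L ∧ π (K' + 1 + i) ∈ D L := by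
      intro i
      induction i with
      | zero =>
        have hi : lv (π K') = L := hconst K' hKK'
        have h' := (hstep K' (hInv K')).2.1 (hi ▸ hK'D)
        rw [hi] at h'
        exact h'
      | succ i ih =>
        have hn : K' + 1 + i ≥ K := by omega
        have hi : lv (π (K' + 1 + i)) = L := hconst _ hn
        have h' := (hstep (K' + 1 + i) (hInv _)).2.1 (hi ▸ ih.2)
        rw [hi] at h'
        exact h'
    refine Set.Finite.subset (Set.finite_Iic K') ?_
    intro n hn
    simp only [Set.mem_setOf_eq] at hn
    show n ≤ K'
    by_contra hgt
    have hgt' : K' + 1 ≤ n := by omega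
    have hna : π n ∉ a L ∧ π n ∈ D L := by
      have : n = K' + 1 + (n - (K' + 1)) := by omega
      rw [this]
      exact hAfter _
    have hnf : π n ∉ f L := fun hmem => hna.1 (hfa L hL1 hmem)
    rcases Nat.lt_or_ge L 2 with hL2 | hL2
    · have : L = 1 := by omega
      rw [this, hf1] at hnf
      exact hnf hn
    · have hBn := hBf L hL2 hn
      rcases hBn with hfL | hwL
      · exact hnf hfL
      · have hle : lv (π n) ≤ L - 1 := hlv_le _ _ (by omega) (by omega) hwL
        have heq : lv (π n) = L := hconst n (by omega)
        omega
end BuchiAux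
end BuchiMainAux

/-- Correctness of the symbolic Büchi game-solving procedure (Algorithm 2): upon
stabilization of the outer fixpoint, the computed set `w N` is exactly the environment
winning region for the co-Büchi objective `coBuchi(B)`, and its complement is exactly
the system winning region for the Büchi objective `Buchi(B)`. -/
theorem buchi_procedure_sound (G : GameStructure S Me Ms) (B : Set S)
    (f a w : ℕ → Set S)
    (hf1 : f 1 = B)
    (ha : ∀ n : ℕ, 1 ≤ n → a n = attrSys G (f n))
    (hw : ∀ n : ℕ, 1 ≤ n → w n = attrEnv G (cpreSys G (a n))ᶜ)
    (hf : ∀ n : ℕ, 1 ≤ n → f (n + 1) = f n \ w n)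
    (N : ℕ) (hN : 1 ≤ N) (hfix : f (N + 1) = f N) :
    w N = {s : S | ∃ σ : EnvStrategy G, ∀ π : ℕ → S, π 0 = s → EnvPlay G σ π →
        {n : ℕ | π n ∈ B}.Finite} ∧
    (w N)ᶜ = {s : S | ∃ σ : SysStrategy G, ∀ π : ℕ → S, π 0 = s → SysPlay G σ π →
        {n : ℕ | π n ∈ B}.Infinite} := by
  classical
  have hfdec : ∀ n : ℕ, 1 ≤ n → f (n+1) ⊆ f n := by
    intro n hn; rw [hf n hn]; exact Set.diff_subset
  have hfmono : ∀ m n : ℕ, 1 ≤ m → m ≤ n → f n ⊆ f m := by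
    intro m n hm hmn
    induction n, hmn using Nat.le_induction with
    | base => exact subset_rfl
    | succ n hmn ih => exact (hfdec n (le_trans hm hmn)).trans ih
  have hwmono : ∀ m n : ℕ, 1 ≤ m → m ≤ n → w m ⊆ w n := by
    intro m n hm hmn
    have hn := le_trans hm hmn
    rw [hw m hm, hw n hn]
    apply BuchiAux.attrEnv_mono
    apply Set.compl_subset_compl.2
    apply BuchiAux.cpreSys_mono
    rw [ha m hm, ha n hn]
    exact BuchiAux.attrSys_mono G (hfmono m n hm hmn)
  have hBf' : ∀ n : ℕ, 1 ≤ n → B ⊆ f (n+1) ∪ w n := by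
    intro n hn
    induction n, hn using Nat.le_induction with
    | base =>
      intro x hx
      rw [← hf1] at hx
      rw [hf 1 le_rfl]
      by_cases hxw : x ∈ w 1
      · exact Or.inr hxw
      · exact Or.inl ⟨hx, hxw⟩
    | succ n hn ih =>
      intro x hx
      rcases ih hx with hxf | hxw
      · by_cases hxw : x ∈ w (n+1)
        · exact Or.inr hxw
        · rw [hf (n+1) (by omega)]
          exact Or.inl ⟨hxf, hxw⟩
      · exact Or.inr (hwmono n (n+1) hn (by omega) hxw)
  have hBf : ∀ n : ℕ, 2 ≤ n → B ⊆ f n ∪ w (n-1) := by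
    intro n hn
    have := hBf' (n-1) (by omega)
    have heq : n - 1 + 1 = n := by omega
    rwa [heq] at this
  have hFw : ∀ x, x ∈ f N → x ∉ w N := by
    intro x hx hxw
    have : x ∈ f (N+1) := hfix.symm ▸ hx
    rw [hf N hN] at this
    exact this.2 hxw
  have hFB : f N ⊆ B := hf1 ▸ hfmono 1 N le_rfl hN
  have hDsubW : (cpreSys G (a N))ᶜ ⊆ w N := by
    rw [hw N hN]; exact BuchiAux.subset_attrEnv G _
  have hWc : ∀ x, x ∉ w N → x ∈ cpreSys G (attrSys G (f N)) := by
    intro x hx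
    rw [← ha N hN]
    by_contra h
    exact hx (hDsubW h)
  have hFc : f N ⊆ cpreSys G (attrSys G (f N)) := fun x hx => hWc x (hFw x hx)
  have hEnv : ∀ s, s ∈ w N → ∃ σe : EnvStrategy G, ∀ π : ℕ → S, π 0 = s →
      EnvPlay G σe π → {n : ℕ | π n ∈ B}.Finite := fun s hs =>
    BuchiAux.env_cobuchi G B f a w N hN hf1 ha hw hwmono hBf hs
  have hSys : ∀ s, s ∉ w N → ∃ σs : SysStrategy G, ∀ π : ℕ → S, π 0 = s →
      SysPlay G σs π → {n : ℕ | π n ∈ B}.Infinite := fun s hs =>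
    BuchiAux.sys_buchi G (f N) B hFc hFB (hWc s hs)
  have hdisj : ∀ s : S, (∃ σe : EnvStrategy G, ∀ π : ℕ → S, π 0 = s →
        EnvPlay G σe π → {n : ℕ | π n ∈ B}.Finite) →
      (∃ σs : SysStrategy G, ∀ π : ℕ → S, π 0 = s →
        SysPlay G σs π → {n : ℕ | π n ∈ B}.Infinite) → False := by
    rintro s ⟨σe, he⟩ ⟨σs, hsy⟩
    exact (hsy (BuchiAux.jplay σe σs s) rfl (BuchiAux.jplay_sysPlay σe σs s))
      (he (BuchiAux.jplay σe σs s) rfl (BuchiAux.jplay_envPlay σe σs s))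
  constructor
  · apply Set.Subset.antisymm
    · intro s hs
      exact hEnv s hs
    · intro s hs
      by_contra hsw
      exact hdisj s hs (hSys s hsw)
  · apply Set.Subset.antisymm
    · intro s hs
      exact hSys s hs
    · intro s hs
      by_contra hsw
      have hsW : s ∈ w N := not_not.1 hsw
      exact hdisj s (hEnv s hsW) hs
end
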